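/- For every connected graph G on n ≥ 2 vertices, ∂₁(G) - π(G) ≥ n-2, with equality if and only if G is the complete graph K_n. -/

import Mathlib

open SimpleGraph Finset

/-- The transmission of a vertex: the sum of distances from `v` to all other vertices. -/
noncomputable def transmission {n : ℕ} (G : SimpleGraph (Fin n)) (v : Fin n) : ℕ :=
  ∑ u, G.dist v u

/-- The proximity: the minimum average distance from a vertex to all others. -/
noncomputable def proximity {n : ℕ} (G : SimpleGraph (Fin n)) : ℝ :=
  sInf {x : ℝ | ∃ v : Fin n, x = transmission G v} / (n - 1)

/-- The remoteness: the maximum average distance from a vertex to all others. -/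
noncomputable def remoteness {n : ℕ} (G : SimpleGraph (Fin n)) : ℝ :=
  sSup {x : ℝ | ∃ v : Fin n, x = transmission G v} / (n - 1)

/-- The distance matrix of a graph. -/
noncomputable def distMatrix {n : ℕ} (G : SimpleGraph (Fin n)) : Matrix (Fin n) (Fin n) ℝ :=
  fun u v => (G.dist u v : ℝ)

/-- The largest distance eigenvalue ∂₁. -/
noncomputable def maxDistEig {n : ℕ} (G : SimpleGraph (Fin n)) : ℝ :=
  sSup (spectrum ℝ (distMatrix G))

/-- The smallest distance eigenvalue ∂ₙ. -/
noncomputable def minDistEig {n : ℕ} (G : SimpleGraph (Fin n)) : ℝ :=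
  sInf (spectrum ℝ (distMatrix G))


/-!
Let `t(v)` be the transmission and `T` its minimum, so `π = T / (n - 1)`. Testing the distance
matrix against the all-ones vector gives `∂₁ ≥ (∑ t(v)) / n ≥ T`, and connectivity gives
`T ≥ n - 1`. Hence `∂₁ - π - (n - 2) = (∂₁ - T) + (n - 2) (T - (n - 1)) / (n - 1)` is a sum of two
nonnegative terms. For `n ≥ 3` equality forces `∂₁ = n - 1`, so `∑ t(v) ≤ n (n - 1)` and every
vertex is adjacent to all others; a connected graph on two vertices is `K₂` anyway. Conversely,
Gershgorin's theorem bounds `∂₁(Kₙ)` by its row sums `n - 1`.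
-/

namespace Matrix

variable {ι : Type*} [Fintype ι] [DecidableEq ι]

theorem IsHermitian.dotProduct_mulVec_le_sSup_spectrum_mul {A : Matrix ι ι ℝ}
    (hA : A.IsHermitian) (x : ι → ℝ) :
    x ⬝ᵥ A *ᵥ x ≤ sSup (spectrum ℝ A) * (x ⬝ᵥ x) := by
  set c := sSup (spectrum ℝ A)
  have hpsd : (algebraMap ℝ _ c - A).PosSemidef := by
    refine posSemidef_iff_isHermitian_and_spectrum_nonneg.2 ⟨?_, ?_⟩
    · rw [algebraMap_eq_diagonal]
      exact (isHermitian_diagonal_of_self_adjoint _ (by simp [IsSelfAdjoint])).sub hA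
    · rw [← spectrum.singleton_sub_eq]
      rintro _ ⟨_, rfl, μ, hμ, rfl⟩
      simpa using le_csSup A.finite_real_spectrum.bddAbove hμ
  have := hpsd.dotProduct_mulVec_nonneg x
  rw [star_trivial, sub_mulVec, dotProduct_sub, Algebra.algebraMap_eq_smul_one, smul_mulVec,
    one_mulVec, dotProduct_smul, smul_eq_mul] at this
  linarith

theorem le_of_mem_spectrum_of_sum_row_le {A : Matrix ι ι ℝ} (hA : ∀ i j, 0 ≤ A i j) {r : ℝ}
    (hr : ∀ i, ∑ j, A i j ≤ r) {μ : ℝ} (hμ : μ ∈ spectrum ℝ A) : μ ≤ r := by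
  obtain ⟨k, hk⟩ := eigenvalue_mem_ball
    (Module.End.hasEigenvalue_iff_mem_spectrum.2 ((spectrum_toLin' A).symm ▸ hμ))
  rw [Metric.mem_closedBall, Real.dist_eq] at hk
  simp only [Real.norm_eq_abs, abs_of_nonneg (hA _ _)] at hk
  linarith [hr k, le_abs_self (μ - A k k), Finset.add_sum_erase univ (A k) (mem_univ k)]

end Matrix

section Transmission

variable {n : ℕ} {G : SimpleGraph (Fin n)}

theorem transmission_eq_sum_erase (G : SimpleGraph (Fin n)) (v : Fin n) :
    transmission G v = ∑ u ∈ univ.erase v, G.dist v u := by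
  rw [transmission, ← add_sum_erase _ _ (mem_univ v), dist_self, zero_add]

theorem le_transmission (hG : G.Connected) (v : Fin n) : n - 1 ≤ transmission G v := by
  rw [transmission_eq_sum_erase]
  calc n - 1 = #(univ.erase v) • 1 := by simp
    _ ≤ _ := card_nsmul_le_sum _ _ _ fun u hu => hG.pos_dist_of_ne (ne_of_mem_erase hu).symm

theorem adj_of_transmission_le (hG : G.Connected) {u v : Fin n} (h : transmission G v ≤ n - 1)
    (hvu : v ≠ u) : G.Adj v u := by
  have hle : ∀ w ∈ univ.erase v, 1 ≤ G.dist v w := fun w hw =>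
    hG.pos_dist_of_ne (ne_of_mem_erase hw).symm
  have hsum : ∑ w ∈ univ.erase v, 1 = ∑ w ∈ univ.erase v, G.dist v w := by
    refine le_antisymm (sum_le_sum hle) ?_
    rw [← transmission_eq_sum_erase]
    simpa using h
  exact dist_eq_one_iff_adj.1
    ((sum_eq_sum_iff_of_le hle).1 hsum u (mem_erase.2 ⟨hvu.symm, mem_univ u⟩)).symm

theorem transmission_top (v : Fin n) : transmission (⊤ : SimpleGraph (Fin n)) v = n - 1 := by
  rw [transmission_eq_sum_erase,
    sum_congr rfl fun u hu => dist_eq_one_iff_adj.2 ((top_adj _ _).2 (ne_of_mem_erase hu).symm)]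
  simp

theorem eq_top_of_sum_transmission_le (hG : G.Connected)
    (h : ∑ v, transmission G v ≤ n * (n - 1)) : G = ⊤ := by
  have hle : ∀ v ∈ univ, n - 1 ≤ transmission G v := fun v _ => le_transmission hG v
  have hsum : ∑ _v : Fin n, (n - 1) = ∑ v, transmission G v :=
    le_antisymm (sum_le_sum hle) (by simpa using h)
  ext u v
  exact ⟨Adj.ne, adj_of_transmission_le hG ((sum_eq_sum_iff_of_le hle).1 hsum u (mem_univ u)).ge⟩

theorem proximity_eq_of_forall_transmission_le {v : Fin n}
    (hv : ∀ u, transmission G v ≤ transmission G u) :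
    proximity G = transmission G v / (n - 1) := by
  rw [proximity]
  congr 1
  refine IsLeast.csInf_eq ⟨⟨v, rfl⟩, ?_⟩
  rintro _ ⟨u, rfl⟩
  exact_mod_cast hv u

end Transmission

theorem SimpleGraph.Connected.eq_top_of_fin_two {G : SimpleGraph (Fin 2)} (hG : G.Connected) :
    G = ⊤ := by
  ext u v
  rw [top_adj]
  refine ⟨Adj.ne, fun huv => ?_⟩
  obtain ⟨w, hw⟩ := (hG.preconnected u v).nonempty_neighborSet_left huv
  obtain rfl : w = v := by have := hw.ne; omega
  exact hw

section DistMatrix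

variable {n : ℕ} (G : SimpleGraph (Fin n))

theorem distMatrix_isHermitian : (distMatrix G).IsHermitian := by
  ext u v
  simp [distMatrix, dist_comm]

theorem distMatrix_nonneg (u v : Fin n) : 0 ≤ distMatrix G u v := Nat.cast_nonneg _

theorem sum_distMatrix_row (v : Fin n) : ∑ u, distMatrix G v u = transmission G v := by
  simp [distMatrix, transmission]

theorem sum_transmission_le_mul_maxDistEig : ∑ v, (transmission G v : ℝ) ≤ n * maxDistEig G := by
  rw [mul_comm]
  simpa [maxDistEig, dotProduct, Matrix.mulVec, sum_distMatrix_row] using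
    (distMatrix_isHermitian G).dotProduct_mulVec_le_sSup_spectrum_mul (fun _ => 1)

theorem maxDistEig_le_of_forall_transmission_le {r : ℕ} (h : ∀ v, transmission G v ≤ r) :
    maxDistEig G ≤ r :=
  Real.sSup_le (fun _ hμ => Matrix.le_of_mem_spectrum_of_sum_row_le (distMatrix_nonneg G)
    (fun v => by rw [sum_distMatrix_row]; exact_mod_cast h v) hμ) r.cast_nonneg

variable {G}

theorem transmission_le_maxDistEig {v : Fin n} (hv : ∀ u, transmission G v ≤ transmission G u) :
    (transmission G v : ℝ) ≤ maxDistEig G := by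
  refine le_of_mul_le_mul_left ?_ (show (0 : ℝ) < n by exact_mod_cast v.pos)
  calc (n : ℝ) * transmission G v = ∑ _u : Fin n, (transmission G v : ℝ) := by simp
    _ ≤ ∑ u, (transmission G u : ℝ) := sum_le_sum fun u _ => by exact_mod_cast hv u
    _ ≤ n * maxDistEig G := sum_transmission_le_mul_maxDistEig G

theorem eq_top_of_maxDistEig_le (hG : G.Connected) (h : maxDistEig G ≤ n - 1) : G = ⊤ := by
  obtain ⟨v⟩ := hG.nonempty
  refine eq_top_of_sum_transmission_le hG ?_
  have : ∑ v, (transmission G v : ℝ) ≤ ((n * (n - 1) : ℕ) : ℝ) := by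
    push_cast [Nat.cast_pred v.pos]
    exact (sum_transmission_le_mul_maxDistEig G).trans (by gcongr)
  exact_mod_cast this

theorem maxDistEig_top (hn : 0 < n) : maxDistEig (⊤ : SimpleGraph (Fin n)) = n - 1 := by
  refine le_antisymm ?_ ?_
  · have := maxDistEig_le_of_forall_transmission_le (⊤ : SimpleGraph (Fin n))
      fun v => (transmission_top v).le
    rwa [Nat.cast_pred hn] at this
  · have := transmission_le_maxDistEig (G := ⊤) (v := ⟨0, hn⟩) fun u => by simp [transmission_top]
    rwa [transmission_top, Nat.cast_pred hn] at this

end DistMatrix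

theorem maxDistEig_sub_proximity {n : ℕ} (hn : 2 ≤ n) (G : SimpleGraph (Fin n))
    (hG : G.Connected) :
    (n : ℝ) - 2 ≤ maxDistEig G - proximity G ∧
      (maxDistEig G - proximity G = (n : ℝ) - 2 ↔ G = ⊤) := by
  have hn2 : (2 : ℝ) ≤ n := by exact_mod_cast hn
  have hn1 : (n : ℝ) - 1 ≠ 0 := by linarith
  obtain ⟨v₀, -, hv₀⟩ := univ.exists_min_image (transmission G) ⟨⟨0, by omega⟩, mem_univ _⟩
  replace hv₀ : ∀ u, transmission G v₀ ≤ transmission G u := fun u => hv₀ u (mem_univ u)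
  rw [proximity_eq_of_forall_transmission_le hv₀]
  set T : ℝ := (transmission G v₀ : ℝ)
  have hT : (n : ℝ) - 1 ≤ T := by
    have : ((n - 1 : ℕ) : ℝ) ≤ T := Nat.cast_le.2 (le_transmission hG v₀)
    rwa [Nat.cast_pred (by omega)] at this
  have hρT : 0 ≤ maxDistEig G - T := sub_nonneg.2 (transmission_le_maxDistEig hv₀)
  have hTn : 0 ≤ (n - 2) * (T - (n - 1)) / (n - 1) :=
    div_nonneg (mul_nonneg (by linarith) (by linarith)) (by linarith)
  have key : maxDistEig G - T / (n - 1) - (n - 2) =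
      (maxDistEig G - T) + (n - 2) * (T - (n - 1)) / (n - 1) := by
    field_simp
    ring
  refine ⟨by linarith, fun heq => ?_, ?_⟩
  · obtain ⟨hρ, hT'⟩ := (add_eq_zero_iff_of_nonneg hρT hTn).1 (by linarith)
    rcases hn.eq_or_lt with rfl | hn3
    · exact hG.eq_top_of_fin_two
    have hn3' : (3 : ℝ) ≤ n := by exact_mod_cast hn3
    rcases mul_eq_zero.1 ((div_eq_zero_iff.1 hT').resolve_right hn1) with h | h
    · linarith
    · exact eq_top_of_maxDistEig_le hG (by linarith)
  · rintro rfl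
    simp only [T, maxDistEig_top (by omega : 0 < n), transmission_top,
      Nat.cast_pred (by omega : 0 < n), div_self hn1]
    ring
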